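/- For a real symmetric c×c matrix G* with eigenvalues λ₁ ≥ … ≥ λ_c, and for any positive semidefinite matrix G ∈ ℝ^{c×c} with rank(G) ≤ d, one has ‖G* − G‖_F² ≥ Σ_{i > d or λ_i < 0} λ_i², where the sum is over eigenvalues not among the top d nonnegative eigenvalues. -/
import Mathlib


open Matrix BigOperators Classical Finset

noncomputable def frobSq {n m : ℕ} (M : Matrix (Fin n) (Fin m) ℝ) : ℝ :=
  ∑ i, ∑ j, (M i j) ^ 2

lemma frobSq_eq_trace {n : ℕ} (M : Matrix (Fin n) (Fin n) ℝ) :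
    frobSq M = (Mᵀ * M).trace := by
  simp only [frobSq, Matrix.trace, Matrix.diag, Matrix.mul_apply, Matrix.transpose_apply, sq]
  rw [Finset.sum_comm]

lemma frobSq_conj {n : ℕ} (Q M : Matrix (Fin n) (Fin n) ℝ) (hQ : Qᵀ * Q = 1) :
    frobSq (Q * M * Qᵀ) = frobSq M := by
  rw [frobSq_eq_trace, frobSq_eq_trace]
  have e1 : (Q * M * Qᵀ)ᵀ = Q * Mᵀ * Qᵀ := by
    rw [Matrix.transpose_mul, Matrix.transpose_mul, Matrix.transpose_transpose,
      Matrix.mul_assoc]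
  rw [e1]
  have e2 : (Q * Mᵀ * Qᵀ) * (Q * M * Qᵀ) = Q * ((Mᵀ * M) * Qᵀ) := by
    calc (Q * Mᵀ * Qᵀ) * (Q * M * Qᵀ) = Q * (Mᵀ * ((Qᵀ * Q) * (M * Qᵀ))) := by
          simp only [Matrix.mul_assoc]
      _ = Q * ((Mᵀ * M) * Qᵀ) := by rw [hQ, Matrix.one_mul, Matrix.mul_assoc]
  rw [e2, Matrix.trace_mul_comm, Matrix.mul_assoc, hQ, Matrix.mul_one]

/-- If `g` is antitone nonnegative and `0 ≤ w ≤ 1` with `∑ w ≤ d`, then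
`∑ g i * w i ≤ ∑_{i < d} g i`. -/
lemma weight_bound {cc dd : ℕ} (hd : dd ≤ cc) (g w : Fin cc → ℝ)
    (hg0 : ∀ i, 0 ≤ g i) (hganti : ∀ i j : Fin cc, i ≤ j → g j ≤ g i)
    (hw0 : ∀ i, 0 ≤ w i) (hw1 : ∀ i, w i ≤ 1) (hws : ∑ i, w i ≤ (dd : ℝ)) :
    ∑ i, g i * w i ≤ ∑ i ∈ Finset.univ.filter (fun i : Fin cc => (i : ℕ) < dd), g i := by
  rcases Nat.lt_or_ge dd cc with hlt | hge
  · set i0 : Fin cc := ⟨dd, hlt⟩ with hi0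
    set t := g i0 with ht
    have ht0 : 0 ≤ t := hg0 _
    have hcard : (Finset.univ.filter (fun i : Fin cc => (i : ℕ) < dd)).card = dd := by
      have : (Finset.univ.filter (fun i : Fin cc => (i : ℕ) < dd))
          = Finset.map (Fin.castLEEmb hd) Finset.univ := by
        ext i
        simp only [Finset.mem_filter, Finset.mem_univ, true_and, Finset.mem_map,
          Fin.castLEEmb_apply]
        constructor
        · intro h; exact ⟨⟨(i : ℕ), h⟩, rfl⟩
        · rintro ⟨a, rfl⟩; simpa using a.isLt
      rw [this, Finset.card_map, Finset.card_univ, Fintype.card_fin]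
    have key : ∀ i : Fin cc, g i * w i ≤ t * w i + (if (i : ℕ) < dd then g i - t else 0) := by
      intro i
      by_cases h : (i : ℕ) < dd
      · simp only [if_pos h]
        have hgi : t ≤ g i := hganti i i0 (le_of_lt h)
        nlinarith [hw1 i, hw0 i]
      · simp only [if_neg h]
        have hgi : g i ≤ t := hganti i0 i (Nat.le_of_not_lt h)
        nlinarith [hw0 i]
    calc ∑ i, g i * w i
        ≤ ∑ i, (t * w i + (if (i : ℕ) < dd then g i - t else 0)) :=
          Finset.sum_le_sum (fun i _ => key i)
      _ = t * (∑ i, w i) + ∑ i ∈ Finset.univ.filter (fun i : Fin cc => (i : ℕ) < dd),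
            (g i - t) := by
          rw [Finset.sum_add_distrib, ← Finset.mul_sum, Finset.sum_filter]
      _ = t * (∑ i, w i) + ((∑ i ∈ Finset.univ.filter (fun i : Fin cc => (i : ℕ) < dd), g i)
            - dd * t) := by
          rw [Finset.sum_sub_distrib, Finset.sum_const, hcard, nsmul_eq_mul]
      _ ≤ ∑ i ∈ Finset.univ.filter (fun i : Fin cc => (i : ℕ) < dd), g i := by
          nlinarith [mul_le_mul_of_nonneg_left hws ht0]
  · have hall : (Finset.univ.filter (fun i : Fin cc => (i : ℕ) < dd))
        = (Finset.univ : Finset (Fin cc)) := by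
      ext i
      simp [lt_of_lt_of_le i.isLt hge]
    rw [hall]
    exact Finset.sum_le_sum (fun i _ => by nlinarith [hg0 i, hw1 i, hw0 i])

/-- Jensen / Cauchy–Schwarz: with weights summing to one,
`(∑ ρ i * c i)^2 ≤ ∑ c i * ρ i ^ 2`. -/
lemma jensen_sq {n : ℕ} (cv ρ : Fin n → ℝ) (hc0 : ∀ i, 0 ≤ cv i) (hc1 : ∑ i, cv i = 1) :
    (∑ i, ρ i * cv i) ^ 2 ≤ ∑ i, cv i * ρ i ^ 2 := by
  have h := Finset.sum_mul_sq_le_sq_mul_sq Finset.univ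
    (fun i => Real.sqrt (cv i)) (fun i => Real.sqrt (cv i) * ρ i)
  have e1 : ∀ i : Fin n, Real.sqrt (cv i) * (Real.sqrt (cv i) * ρ i) = ρ i * cv i := by
    intro i
    rw [← mul_assoc, Real.mul_self_sqrt (hc0 i)]
    ring
  have e2 : ∀ i : Fin n, Real.sqrt (cv i) ^ 2 = cv i := fun i => Real.sq_sqrt (hc0 i)
  have e3 : ∀ i : Fin n, (Real.sqrt (cv i) * ρ i) ^ 2 = cv i * ρ i ^ 2 := by
    intro i
    rw [mul_pow, e2]
  simp only [e1, e2, e3] at h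
  rwa [hc1, one_mul] at h

theorem stmt4 {c d : ℕ} (hd : d ≤ c)
    (Gstar : Matrix (Fin c) (Fin c) ℝ) (hsym : Gstar.IsSymm)
    (Q : Matrix (Fin c) (Fin c) ℝ) (hQ : Qᵀ * Q = 1)
    (lam : Fin c → ℝ)
    (hdecr : ∀ i j : Fin c, i ≤ j → lam j ≤ lam i)
    (hdecomp : Gstar = Q * Matrix.diagonal lam * Qᵀ)
    (G : Matrix (Fin c) (Fin c) ℝ) (hG : G.PosSemidef) (hrank : G.rank ≤ d) :
    ∑ i ∈ Finset.univ.filter (fun i : Fin c => ¬((i : ℕ) < d ∧ 0 ≤ lam i)),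
        (lam i) ^ 2 ≤ frobSq (Gstar - G) := by
  classical
  have hct : ∀ (A : Matrix (Fin c) (Fin c) ℝ), Aᴴ = Aᵀ := by
    intro A; ext i j; simp [Matrix.conjTranspose_apply]
  set D1 := Matrix.diagonal lam with hD1
  have hQQ : Q * Qᵀ = 1 := mul_eq_one_comm.mp hQ
  set B := Qᵀ * G * Q with hBdef
  have hBpsd : B.PosSemidef := by
    have := hG.conjTranspose_mul_mul_same Q
    rwa [hct] at this
  have hBherm : B.IsHermitian := hBpsd.1
  have hBt : Bᵀ = B := by rw [← hct]; exact hBherm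
  have hBrank : B.rank ≤ d := by
    refine le_trans (le_trans (Matrix.rank_mul_le_left _ _) ?_) hrank
    exact Matrix.rank_mul_le_right _ _
  -- Step 1 : reduce to diagonal form
  have hGeq : Gstar - G = Q * (D1 - B) * Qᵀ := by
    have e : Q * (D1 - B) * Qᵀ = Q * D1 * Qᵀ - Q * B * Qᵀ := by noncomm_ring
    rw [e, hdecomp]
    congr 1
    symm
    calc Q * B * Qᵀ = (Q * Qᵀ) * G * (Q * Qᵀ) := by
          rw [hBdef]; simp only [Matrix.mul_assoc]
      _ = G := by rw [hQQ, Matrix.one_mul, Matrix.mul_one]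
  have hfrob : frobSq (Gstar - G) = frobSq (D1 - B) := by
    rw [hGeq, frobSq_conj _ _ hQ]
  -- Step 2 : expand the square
  have hexp : frobSq (D1 - B) = (∑ i, lam i ^ 2) - (2 * (D1 * B).trace - (B * B).trace) := by
    rw [frobSq_eq_trace]
    have hsymDB : (D1 - B)ᵀ = D1 - B := by
      rw [Matrix.transpose_sub, hBt, hD1, Matrix.diagonal_transpose]
    rw [hsymDB]
    have expand : (D1 - B) * (D1 - B) = D1 * D1 - D1 * B - B * D1 + B * B := by
      noncomm_ring
    rw [expand, Matrix.trace_add, Matrix.trace_sub, Matrix.trace_sub]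
    have h1 : (D1 * D1).trace = ∑ i, lam i ^ 2 := by
      rw [hD1, Matrix.diagonal_mul_diagonal, Matrix.trace_diagonal]
      exact Finset.sum_congr rfl (fun i _ => (sq (lam i)).symm ▸ rfl)
    have h2 : (B * D1).trace = (D1 * B).trace := Matrix.trace_mul_comm _ _
    rw [h1, h2]; ring
  -- Step 3 : spectral decomposition of B
  set V : Matrix (Fin c) (Fin c) ℝ := (hBherm.eigenvectorUnitary : Matrix (Fin c) (Fin c) ℝ)
    with hV
  set β : Fin c → ℝ := hBherm.eigenvalues with hβ
  have hβ0 : ∀ j, 0 ≤ β j := fun j => hBpsd.eigenvalues_nonneg j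
  have hspec : B = V * Matrix.diagonal β * Vᵀ := by
    have h := hBherm.spectral_theorem
    have hco : (RCLike.ofReal ∘ hBherm.eigenvalues : Fin c → ℝ) = β := by
      funext i; simp [hβ]
    rw [hco] at h
    rw [← hct]
    exact h
  have hVmem := hBherm.eigenvectorUnitary.2
  have hVV : Vᵀ * V = 1 := by
    have := Matrix.mem_unitaryGroup_iff'.mp hVmem
    rw [Matrix.star_eq_conjTranspose, hct] at this
    exact this
  have hVVt : V * Vᵀ = 1 := by
    have := Matrix.mem_unitaryGroup_iff.mp hVmem
    rw [Matrix.star_eq_conjTranspose, hct] at this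
    exact this
  have hcol : ∀ j, ∑ i, (V i j) ^ 2 = 1 := by
    intro j
    have := congrArg (fun M => M j j) hVV
    simpa [Matrix.mul_apply, Matrix.one_apply, sq] using this
  have hrow : ∀ i, ∑ j, (V i j) ^ 2 = 1 := by
    intro i
    have := congrArg (fun M => M i i) hVVt
    simpa [Matrix.mul_apply, Matrix.one_apply, sq] using this
  set a : Fin c → ℝ := fun j => ∑ i, lam i * (V i j) ^ 2 with ha
  -- trace identities
  have hBentry : ∀ i k, B i k = ∑ j, V i j * β j * V k j := by
    intro i k
    conv_lhs => rw [hspec]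
    rw [Matrix.mul_apply]
    exact Finset.sum_congr rfl (fun j _ => by rw [Matrix.mul_diagonal, Matrix.transpose_apply])
  have h_trDB : (D1 * B).trace = ∑ j, β j * a j := by
    have : (D1 * B).trace = ∑ i, lam i * B i i := by
      simp [Matrix.trace, Matrix.diag, hD1, Matrix.diagonal_mul]
    rw [this]
    have e : ∀ i, lam i * B i i = ∑ j, β j * (lam i * (V i j) ^ 2) := by
      intro i
      rw [hBentry, Finset.mul_sum]
      exact Finset.sum_congr rfl (fun j _ => by ring)
    simp only [e]
    rw [Finset.sum_comm]
    exact Finset.sum_congr rfl (fun j _ => by rw [ha, Finset.mul_sum])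
  have h_trBB : (B * B).trace = ∑ j, β j ^ 2 := by
    have h1 : (B * B).trace = frobSq B := by
      rw [frobSq_eq_trace, hBt]
    have h2 : frobSq B = frobSq (Matrix.diagonal β) := by
      rw [hspec]; exact frobSq_conj _ _ hVV
    have h3 : frobSq (Matrix.diagonal β) = ∑ j, β j ^ 2 := by
      simp [frobSq, Matrix.diagonal_apply, Finset.sum_ite_eq', ite_pow]
    rw [h1, h2, h3]
  -- the positive parts
  set ρ : Fin c → ℝ := fun i => max (lam i) 0 with hρ
  have hρ0 : ∀ i, 0 ≤ ρ i := fun i => le_max_right _ _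
  set s : Fin c → ℝ := fun j => if β j = 0 then 0 else 1 with hs
  have hs0 : ∀ j, 0 ≤ s j := by intro j; rw [hs]; dsimp only; split <;> norm_num
  have hs1 : ∀ j, s j ≤ 1 := by intro j; rw [hs]; dsimp only; split <;> norm_num
  have hcount : ∑ j, s j ≤ (d : ℝ) := by
    have hrk := hBherm.rank_eq_card_non_zero_eigs
    have hcard : (Finset.univ.filter (fun j => β j ≠ 0)).card ≤ d := by
      rw [← Fintype.card_subtype]
      exact le_trans (le_of_eq hrk.symm) hBrank
    have e : ∀ j, s j = if β j ≠ 0 then (1 : ℝ) else 0 := by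
      intro j; rw [hs]; by_cases h : β j = 0 <;> simp [h]
    calc ∑ j, s j = ((Finset.univ.filter (fun j => β j ≠ 0)).card : ℝ) := by
          simp only [e]; rw [Finset.sum_boole]
      _ ≤ (d : ℝ) := by exact_mod_cast hcard
  -- key pointwise bound
  have keyj : ∀ j, 2 * β j * a j - β j ^ 2 ≤ s j * (∑ i, (V i j) ^ 2 * ρ i ^ 2) := by
    intro j
    by_cases hz : β j = 0
    · simp [hs, hz]
    · rw [hs]; simp only [if_neg hz, one_mul]
      have hR0 : 0 ≤ ∑ i, (V i j) ^ 2 * ρ i ^ 2 :=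
        Finset.sum_nonneg (fun i _ => by positivity)
      set m := ∑ i, ρ i * (V i j) ^ 2 with hm
      have hm0 : 0 ≤ m := Finset.sum_nonneg (fun i _ => by positivity)
      have ham : a j ≤ m := by
        rw [ha, hm]
        refine Finset.sum_le_sum (fun i _ => ?_)
        exact mul_le_mul_of_nonneg_right (le_max_left _ _) (sq_nonneg _)
      have hcs : m ^ 2 ≤ ∑ i, (V i j) ^ 2 * ρ i ^ 2 := by
        rw [hm]
        exact jensen_sq (fun i => (V i j) ^ 2) ρ (fun i => sq_nonneg _) (hcol j)
      nlinarith [sq_nonneg (m - β j), hβ0 j, mul_le_mul_of_nonneg_left ham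
        (mul_nonneg (by norm_num : (0:ℝ) ≤ 2) (hβ0 j))]
  set w : Fin c → ℝ := fun i => ∑ j, s j * (V i j) ^ 2 with hw
  have hswap : ∑ j, s j * (∑ i, (V i j) ^ 2 * ρ i ^ 2) = ∑ i, ρ i ^ 2 * w i := by
    simp only [Finset.mul_sum]
    rw [Finset.sum_comm]
    refine Finset.sum_congr rfl (fun i _ => ?_)
    rw [hw]
    dsimp only
    rw [Finset.mul_sum]
    exact Finset.sum_congr rfl (fun j _ => by ring)
  have hw0 : ∀ i, 0 ≤ w i := by
    intro i; exact Finset.sum_nonneg (fun j _ => mul_nonneg (hs0 j) (sq_nonneg _))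
  have hw1 : ∀ i, w i ≤ 1 := by
    intro i
    calc w i ≤ ∑ j, (V i j) ^ 2 := by
          refine Finset.sum_le_sum (fun j _ => ?_)
          have := mul_le_mul_of_nonneg_right (hs1 j) (sq_nonneg (V i j))
          simpa using this
      _ = 1 := hrow i
  have hws : ∑ i, w i ≤ (d : ℝ) := by
    have : ∑ i, w i = ∑ j, s j := by
      rw [hw]
      rw [Finset.sum_comm]
      refine Finset.sum_congr rfl (fun j _ => ?_)
      rw [← Finset.mul_sum, hcol j, mul_one]
    rw [this]; exact hcount
  -- apply the weight bound
  have hganti : ∀ i j : Fin c, i ≤ j → ρ j ^ 2 ≤ ρ i ^ 2 := by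
    intro i j hij
    have h1 : ρ j ≤ ρ i := max_le_max (hdecr i j hij) le_rfl
    exact pow_le_pow_left₀ (hρ0 j) h1 2
  have hWB : ∑ i, ρ i ^ 2 * w i ≤
      ∑ i ∈ Finset.univ.filter (fun i : Fin c => (i : ℕ) < d), ρ i ^ 2 :=
    weight_bound hd (fun i => ρ i ^ 2) w (fun i => sq_nonneg _) hganti hw0 hw1 hws
  -- rewrite the right side of hWB
  have hfiltereq : ∑ i ∈ Finset.univ.filter (fun i : Fin c => (i : ℕ) < d), ρ i ^ 2
      = ∑ i ∈ Finset.univ.filter (fun i : Fin c => (i : ℕ) < d ∧ 0 ≤ lam i), lam i ^ 2 := by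
    rw [Finset.sum_filter, Finset.sum_filter]
    refine Finset.sum_congr rfl (fun i _ => ?_)
    by_cases h1 : (i : ℕ) < d
    · by_cases h2 : 0 ≤ lam i
      · simp [h1, h2, hρ, max_eq_left h2]
      · have : max (lam i) 0 = 0 := max_eq_right (le_of_lt (lt_of_not_ge h2))
        simp [h1, h2, hρ, this]
    · simp [h1]
  -- assemble
  have hFbound : 2 * (D1 * B).trace - (B * B).trace ≤
      ∑ i ∈ Finset.univ.filter (fun i : Fin c => (i : ℕ) < d ∧ 0 ≤ lam i), lam i ^ 2 := by
    rw [h_trDB, h_trBB, Finset.mul_sum, ← Finset.sum_sub_distrib]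
    calc ∑ j, (2 * (β j * a j) - β j ^ 2)
        ≤ ∑ j, s j * (∑ i, (V i j) ^ 2 * ρ i ^ 2) := by
          refine Finset.sum_le_sum (fun j _ => ?_)
          have := keyj j
          linarith [this]
      _ = ∑ i, ρ i ^ 2 * w i := hswap
      _ ≤ _ := by rw [← hfiltereq]; exact hWB
  have hsplit : (∑ i ∈ Finset.univ.filter (fun i : Fin c => (i : ℕ) < d ∧ 0 ≤ lam i), lam i ^ 2)
      + (∑ i ∈ Finset.univ.filter (fun i : Fin c => ¬((i : ℕ) < d ∧ 0 ≤ lam i)), lam i ^ 2)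
      = ∑ i, lam i ^ 2 :=
    Finset.sum_filter_add_sum_filter_not _ _ _
  rw [hfrob, hexp]
  linarith [hFbound, hsplit]
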